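/- arXiv:1412.6822 — 2 statements merged into one kernel-verified Lean document; each statement's English description precedes it below -/
import Mathlib

section
/- Define the derived sequence r : {1,2,3,…} → A of η by r(j) := η(2j − 1) (so that η = p⁽⁰⁾ r(1) p⁽⁰⁾ r(2) p⁽⁰⁾ ⋯ with p⁽⁰⁾ = a). Then r takes values in {x,y,z}, and: (i) the letters y and z occur isolated in r, i.e., if r(j) ∈ {y,z} then r(j+1) = x and, when j ≥ 2, also r(j−1) = x; (ii) the letter x occurs either isolated or in blocks of exactly three, i.e., every maximal block of consecutive positions j with r(j) = x has length 1 or 3. -/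
/-- The four-letter alphabet `A = {a, x, y, z}`. -/
inductive A : Type
  | a | x | y | z
  deriving DecidableEq, Repr

/-- The substitution `τ : a ↦ axa, x ↦ y, y ↦ z, z ↦ x`. -/
def tau : A → List A
  | A.a => [A.a, A.x, A.a]
  | A.x => [A.y]
  | A.y => [A.z]
  | A.z => [A.x]

/-- The substitution `τ` extended to finite words by concatenation. -/
def tauW (w : List A) : List A := w.flatMap tau

/-- `pw n = τⁿ(a)`, a word of length `2^(n+1) - 1`. -/
def pw : ℕ → List A
  | 0 => [A.a]
  | n + 1 => tauW (pw n)

/-- The fixed point `η` of `τ`: the unique one-sided infinite word having every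
`τⁿ(a)` as a prefix.  (Since `pw (n+1)` has length `2^(n+2) - 1 > n`, reading its
`n`-th letter is well defined and independent of the choice of a large enough iterate.) -/
def eta (n : ℕ) : A := (pw (n + 1)).getD n A.a

/-- `w` is a (finite) factor of `η`. -/
def IsFactorEta (w : List A) : Prop :=
  ∃ i : ℕ, w = (List.range w.length).map (fun k => eta (i + k))

/-- The derived sequence `r` of `η`, defined for `j ≥ 1` by `r(j) = η(2j - 1)`,
so that `η = p⁽⁰⁾ r(1) p⁽⁰⁾ r(2) p⁽⁰⁾ ⋯` with `p⁽⁰⁾ = a`. -/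
def rseq (j : ℕ) : A := eta (2 * j - 1)

/-! Writing `τⁿ⁺¹(a) = a u₀ a u₁ ⋯ a`, the letters between
the `a`'s are the images of the letters of `τⁿ(a)` under the letter map `shift` (which is `τ` on
`x, y, z` and sends `a` to the middle letter `x` of `τ(a)`). Hence `η(2n) = a` and
`η(2n+1) = shift (η n)`, i.e. `r(2k+1) = x` and `r(2k) = shift (r k)`. So every letter other than
`x` sits at an even position of `r`, between two `x`'s at odd positions. A run of `x`'s of length
at least two starts at an odd position `2k+1`; then `r(2k+2) = x` forces `r(k+1) = z`, so `k+1`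
is even and `r(2k+4) = shift (r(k+2)) = shift x = y` ends the run after three letters. -/

def shift : A → A
  | A.a => A.x
  | A.x => A.y
  | A.y => A.z
  | A.z => A.x

lemma shift_ne_a (c : A) : shift c ≠ A.a := by
  cases c <;> simp [shift]

lemma tau_of_ne_a {c : A} (h : c ≠ A.a) : tau c = [shift c] := by
  cases c <;> simp_all [tau, shift]

lemma eq_z_of_shift_eq_x {c : A} (hc : c ≠ A.a) (h : shift c = A.x) : c = A.z := by
  cases c <;> simp_all [shift]

def interleaveA : List A → List A
  | [] => [A.a]
  | c :: t => A.a :: c :: interleaveA t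

lemma length_interleaveA (u : List A) : (interleaveA u).length = 2 * u.length + 1 := by
  induction u with
  | nil => rfl
  | cons c t ih => simp only [interleaveA, List.length_cons, ih]; ring

lemma getD_interleaveA_two_mul (u : List A) (k : ℕ) :
    (interleaveA u).getD (2 * k) A.a = A.a := by
  induction u generalizing k with
  | nil => cases k <;> simp [interleaveA]
  | cons c t ih =>
    cases k with
    | zero => rfl
    | succ k => simpa [interleaveA, Nat.mul_succ] using ih k

lemma getD_interleaveA_two_mul_add_one (u : List A) (k : ℕ) (d : A) :
    (interleaveA u).getD (2 * k + 1) d = u.getD k d := by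
  induction u generalizing k with
  | nil => cases k <;> simp [interleaveA]
  | cons c t ih =>
    cases k with
    | zero => rfl
    | succ k => simpa [interleaveA, Nat.mul_succ] using ih k

lemma tauW_interleaveA {u : List A} (h : ∀ c ∈ u, c ≠ A.a) :
    tauW (interleaveA u) = interleaveA ((interleaveA u).map shift) := by
  induction u with
  | nil => rfl
  | cons c t ih =>
    have ht : ∀ d ∈ t, d ≠ A.a := fun d hd => h d (List.mem_cons_of_mem c hd)
    simp only [tauW, interleaveA, List.flatMap_cons] at ih ⊢
    rw [tau_of_ne_a (h c List.mem_cons_self), ih ht]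
    rfl

lemma pw_succ (n : ℕ) : pw (n + 1) = interleaveA ((pw n).map shift) := by
  induction n with
  | zero => rfl
  | succ n ih =>
    rw [pw, ih, tauW_interleaveA, ← ih]
    simpa using fun c _ => shift_ne_a c

lemma pw_prefix_pw_succ (n : ℕ) : pw n <+: pw (n + 1) := by
  induction n with
  | zero => exact ⟨[A.x, A.a], rfl⟩
  | succ n ih => exact ih.flatMap tau

lemma pw_prefix_of_le {m n : ℕ} (h : m ≤ n) : pw m <+: pw n := by
  induction n, h using Nat.le_induction with
  | base => exact List.prefix_refl _
  | succ n _ ih => exact ih.trans (pw_prefix_pw_succ n)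

lemma lt_length_pw (n : ℕ) : n < (pw n).length := by
  induction n with
  | zero => simp [pw]
  | succ n ih =>
    rw [pw_succ, length_interleaveA, List.length_map]
    omega

lemma eta_eq_getD_pw {m n : ℕ} (h : n < (pw m).length) (d : A) : eta n = (pw m).getD n d := by
  have hn : n < (pw (n + 1)).length := (lt_length_pw n).trans_le (pw_prefix_pw_succ n).length_le
  rw [eta, List.getD_eq_getElem _ _ hn, List.getD_eq_getElem _ _ h]
  rcases le_total m (n + 1) with hle | hle
  · exact ((pw_prefix_of_le hle).getElem h).symm
  · exact (pw_prefix_of_le hle).getElem hn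

lemma eta_two_mul (n : ℕ) : eta (2 * n) = A.a := by
  rw [eta, pw_succ, getD_interleaveA_two_mul]

lemma eta_two_mul_add_one (n : ℕ) : eta (2 * n + 1) = shift (eta n) := by
  have hn : n < (pw (2 * n)).length := (lt_length_pw _).trans_le' (by omega)
  rw [eta_eq_getD_pw (lt_length_pw _) (shift A.a), pw_succ, getD_interleaveA_two_mul_add_one,
    List.getD_map, eta_eq_getD_pw hn]

lemma rseq_eq_shift_eta {j : ℕ} (hj : 1 ≤ j) : rseq j = shift (eta (j - 1)) := by
  rw [rseq, ← eta_two_mul_add_one]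
  congr 1
  omega

lemma rseq_ne_a {j : ℕ} (hj : 1 ≤ j) : rseq j ≠ A.a := by
  rw [rseq_eq_shift_eta hj]
  exact shift_ne_a _

lemma rseq_two_mul_add_one (k : ℕ) : rseq (2 * k + 1) = A.x := by
  rw [rseq_eq_shift_eta (by omega), Nat.add_sub_cancel, eta_two_mul]
  rfl

lemma rseq_two_mul {k : ℕ} (hk : 1 ≤ k) : rseq (2 * k) = shift (rseq k) := by
  rw [rseq_eq_shift_eta (by omega), rseq]

lemma rseq_of_odd {j : ℕ} (h : Odd j) : rseq j = A.x := by
  obtain ⟨k, rfl⟩ := h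
  exact rseq_two_mul_add_one k

lemma even_of_rseq_ne_x {j : ℕ} (h : rseq j ≠ A.x) : Even j :=
  Nat.not_odd_iff_even.mp (mt rseq_of_odd h)

lemma rseq_mem {j : ℕ} (hj : 1 ≤ j) : rseq j ∈ ({A.x, A.y, A.z} : Set A) := by
  have h := rseq_ne_a hj
  generalize rseq j = c at h
  cases c <;> simp_all

lemma rseq_neighbours_eq_x {j : ℕ} (h : rseq j ≠ A.x) :
    rseq (j + 1) = A.x ∧ (2 ≤ j → rseq (j - 1) = A.x) := by
  have he := even_of_rseq_ne_x h
  exact ⟨rseq_of_odd he.add_one, fun hj => rseq_of_odd (Nat.Even.sub_odd (by omega) he odd_one)⟩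

lemma rseq_run_of_x {j : ℕ} (hj : 1 ≤ j) (hstart : j = 1 ∨ rseq (j - 1) ≠ A.x)
    (hnext : rseq (j + 1) = A.x) : rseq (j + 2) = A.x ∧ rseq (j + 3) ≠ A.x := by
  obtain ⟨k, rfl⟩ : Odd j := by
    rcases hstart with rfl | hprev
    · exact odd_one
    · exact Nat.not_even_iff_odd.mp fun he => hprev (rseq_of_odd (Nat.Even.sub_odd hj he odd_one))
  rw [show 2 * k + 1 + 1 = 2 * (k + 1) by ring, rseq_two_mul (by omega)] at hnext
  have hz : rseq (k + 1) = A.z := eq_z_of_shift_eq_x (rseq_ne_a (by omega)) hnext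
  have hk : Even (k + 1) := even_of_rseq_ne_x (by rw [hz]; decide)
  refine ⟨rseq_two_mul_add_one (k + 1), ?_⟩
  rw [show 2 * k + 1 + 3 = 2 * (k + 2) by ring, rseq_two_mul (by omega),
    rseq_of_odd (j := k + 2) hk.add_one]
  decide

/-- The derived sequence takes values in `{x,y,z}`; the letters `y` and `z` occur
isolated (preceded and followed by `x`), and every maximal block of consecutive
occurrences of `x` has length `1` or `3`. -/
theorem derived_sequence_structure :
    (∀ j : ℕ, 1 ≤ j → rseq j ∈ ({A.x, A.y, A.z} : Set A)) ∧
    (∀ j : ℕ, 1 ≤ j → rseq j ∈ ({A.y, A.z} : Set A) →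
      rseq (j + 1) = A.x ∧ (2 ≤ j → rseq (j - 1) = A.x)) ∧
    (∀ j : ℕ, 1 ≤ j → rseq j = A.x → (j = 1 ∨ rseq (j - 1) ≠ A.x) →
      rseq (j + 1) ≠ A.x ∨
      (rseq (j + 1) = A.x ∧ rseq (j + 2) = A.x ∧ rseq (j + 3) ≠ A.x)) := by
  refine ⟨fun j hj => rseq_mem hj, fun j _ hyz => rseq_neighbours_eq_x ?_, ?_⟩
  · rcases hyz with h | h <;> rw [h] <;> decide
  · intro j hj _ hstart
    by_cases hnext : rseq (j + 1) = A.x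
    · exact Or.inr ⟨hnext, rseq_run_of_x hj hstart hnext⟩
    · exact Or.inl hnext
end

section
/- Let n ≥ 1 and s ∈ {x,y,z}. If the word p⁽ⁿ⁾ s p⁽ⁿ⁾ (of length 2ⁿ⁺²−1) occurs in η starting at position l (0-indexed), i.e., η(l)η(l+1)⋯η(l+2ⁿ⁺²−2) = p⁽ⁿ⁾ s p⁽ⁿ⁾, then 2ⁿ⁺¹ divides l. In other words, every occurrence of p⁽ⁿ⁾ s p⁽ⁿ⁾ in η is aligned with the blocks p⁽ⁿ⁾ of the n-decomposition η = p⁽ⁿ⁾ r₁⁽ⁿ⁾ p⁽ⁿ⁾ r₂⁽ⁿ⁾ p⁽ⁿ⁾ ⋯. -/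
/-!
The letter `η m` is determined by the 2-adic valuation of `m + 1`: it is `a` when `m + 1` is odd,
and otherwise `x`, `y`, `z` cyclically in `ν₂(m + 1) mod 3`; this follows from
`p⁽ⁿ⁺¹⁾ = p⁽ⁿ⁾ c p⁽ⁿ⁾`, where `c` is the letter of valuation `n + 1`. In particular the letter
of `p⁽ⁿ⁾` at position `2ᵏ - 1` (`k ≤ n`) is the letter of valuation `k`, so an occurrence of
`p⁽ⁿ⁾` at `l` forces `ν₂(l + 2ᵏ)` to carry the letter of `k` for all `k ≤ n`. If `ν₂ l < n`,
the choice `k = ν₂ l + 1` gives `ν₂(l + 2ᵏ) = ν₂ l`, a letter differing from that of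
`ν₂ l + 1`. If `ν₂ l = n`, then `ν₂(l + 2ⁿ) > n + 1`, so at position `2ⁿ - 1` of the second
copy of `p⁽ⁿ⁾`, which starts at `l + 2ⁿ⁺¹`, the valuation is exactly `n + 1`, whose letter
differs from that of `n`.
-/

section OccursAt

variable {α : Type*}

def OccursAt (f : ℕ → α) (w : List α) (l : ℕ) : Prop :=
  (List.range w.length).map (fun j => f (l + j)) = w

theorem occursAt_append {f : ℕ → α} {u v : List α} {l : ℕ} :
    OccursAt f (u ++ v) l ↔ OccursAt f u l ∧ OccursAt f v (l + u.length) := by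
  simp only [OccursAt, List.length_append, List.range_add, List.map_append, List.map_map,
    Function.comp_def, Nat.add_assoc]
  constructor
  · exact fun h => List.append_inj h (by simp)
  · rintro ⟨hu, hv⟩
    rw [hu, hv]

theorem occursAt_map_range {f g : ℕ → α} {N l : ℕ} :
    OccursAt f ((List.range N).map g) l ↔ ∀ j < N, f (l + j) = g j := by
  simp [OccursAt, List.map_inj_left]

end OccursAt

theorem padicValNat_add_eq_left {p a b : ℕ} [Fact p.Prime] (ha : a ≠ 0) (hb : b ≠ 0)
    (h : padicValNat p a < padicValNat p b) : padicValNat p (a + b) = padicValNat p a := by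
  have := padicValRat.add_eq_of_lt (p := p) (q := a) (r := b) (by norm_cast; omega)
    (by exact_mod_cast ha) (by exact_mod_cast hb) (by simpa [padicValRat.of_nat] using h)
  rw [← Nat.cast_add, padicValRat.of_nat, padicValRat.of_nat] at this
  exact_mod_cast this

def valLetter : ℕ → A
  | 0 => A.a
  | v + 1 => if v % 3 = 0 then A.x else if v % 3 = 1 then A.y else A.z

theorem valLetter_succ_ne (v : ℕ) : valLetter (v + 1) ≠ valLetter v := by
  cases v with
  | zero => decide
  | succ v => simp only [valLetter]; split_ifs <;> first | omega | decide

theorem tau_valLetter_succ (v : ℕ) : tau (valLetter (v + 1)) = [valLetter (v + 2)] := by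
  simp only [valLetter]; split_ifs <;> first | omega | rfl

theorem pw_succ_s9 (n : ℕ) : pw (n + 1) = pw n ++ [valLetter (n + 1)] ++ pw n := by
  induction n with
  | zero => rfl
  | succ n ih =>
    show tauW (pw (n + 1)) = _
    conv_lhs => rw [ih]
    simp only [tauW, List.flatMap_append, List.flatMap_singleton, tau_valLetter_succ]
    rfl

theorem pw_eq_map_range (n : ℕ) :
    pw n = (List.range (2 ^ (n + 1) - 1)).map (fun j => valLetter (padicValNat 2 (j + 1))) := by
  induction n with
  | zero => simp [pw, valLetter]
  | succ n ih =>
    have hpos : 0 < 2 ^ (n + 1) := by positivity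
    have hsplit : 2 ^ (n + 1 + 1) - 1 = (2 ^ (n + 1) - 1 + 1) + (2 ^ (n + 1) - 1) := by
      rw [pow_succ]; omega
    rw [pw_succ_s9, hsplit, List.range_add, List.range_succ, List.map_append, List.map_append,
      List.map_map, ← ih, List.map_singleton, Nat.sub_add_cancel hpos, padicValNat.prime_pow]
    congr 1
    conv_lhs => rw [ih]
    refine List.map_congr_left fun j hj => ?_
    have hjN : j + 1 < 2 ^ (n + 1) := by rw [List.mem_range] at hj; omega
    have hval : padicValNat 2 (j + 1) < padicValNat 2 (2 ^ (n + 1)) := by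
      rw [padicValNat.prime_pow]
      exact (padicValNat_le_nat_log _).trans_lt (Nat.log_lt_of_lt_pow j.succ_ne_zero hjN)
    rw [Function.comp_apply, show 2 ^ (n + 1) + j + 1 = j + 1 + 2 ^ (n + 1) by ring,
      padicValNat_add_eq_left (a := j + 1) (by omega) hpos.ne' hval]

theorem eta_eq_valLetter (m : ℕ) : eta m = valLetter (padicValNat 2 (m + 1)) := by
  have hm : m < 2 ^ (m + 1 + 1) - 1 := by
    have := Nat.lt_two_pow_self (n := m + 1); rw [pow_succ]; omega
  rw [eta, pw_eq_map_range, List.getD_eq_getElem _ _ (by simpa using hm)]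
  simp

theorem pw_length (n : ℕ) : (pw n).length = 2 ^ (n + 1) - 1 := by
  simp [pw_eq_map_range]

theorem valLetter_add_two_pow_of_occursAt {n l : ℕ} (h : OccursAt eta (pw n) l) {k : ℕ}
    (hk : k ≤ n) : valLetter (padicValNat 2 (l + 2 ^ k)) = valLetter k := by
  have hlt : 2 ^ k - 1 < 2 ^ (n + 1) - 1 := by
    have := Nat.pow_lt_pow_right one_lt_two (Nat.lt_succ_of_le hk); have := k.one_le_two_pow
    omega
  rw [pw_eq_map_range, occursAt_map_range] at h
  have := h _ hlt
  rwa [eta_eq_valLetter, Nat.sub_add_cancel k.one_le_two_pow, padicValNat.prime_pow,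
    Nat.add_assoc, Nat.sub_add_cancel k.one_le_two_pow] at this

theorem two_pow_succ_dvd_of_valLetter {n l : ℕ}
    (h : ∀ k ≤ n, valLetter (padicValNat 2 (l + 2 ^ k)) = valLetter k)
    (h' : valLetter (padicValNat 2 (l + 2 ^ (n + 1) + 2 ^ n)) = valLetter n) :
    2 ^ (n + 1) ∣ l := by
  by_contra hl
  have hl0 : l ≠ 0 := by rintro rfl; exact hl (dvd_zero _)
  have hv : padicValNat 2 l ≤ n := by
    by_contra! hv
    exact hl ((padicValNat_dvd_iff_le hl0).2 hv)
  rcases hv.lt_or_eq with hv | hv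
  · have hk := h (padicValNat 2 l + 1) hv
    rw [padicValNat_add_eq_left hl0 (by positivity) (by rw [padicValNat.prime_pow]; omega)] at hk
    exact valLetter_succ_ne _ hk.symm
  · have hdvd : 2 ^ (n + 1) ∣ l + 2 ^ n := by
      obtain ⟨q, hq⟩ : 2 ^ n ∣ l := hv ▸ pow_padicValNat_dvd
      obtain ⟨r, rfl⟩ : Odd q := Nat.not_even_iff_odd.1 fun ⟨r, hr⟩ =>
        hl ⟨r, by rw [hq, hr, pow_succ]; ring⟩
      exact ⟨r + 1, by rw [hq, pow_succ]; ring⟩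
    have hge : n + 1 ≤ padicValNat 2 (l + 2 ^ n) :=
      (padicValNat_dvd_iff_le (by positivity)).1 hdvd
    have hne : padicValNat 2 (l + 2 ^ n) ≠ n + 1 := fun he =>
      valLetter_succ_ne n (he ▸ h n le_rfl)
    rw [add_right_comm, add_comm, padicValNat_add_eq_left (by positivity) (by positivity)
      (by rw [padicValNat.prime_pow]; omega), padicValNat.prime_pow] at h'
    exact valLetter_succ_ne n h'

theorem occurrence_alignment_general (n : ℕ) (s : A) (l : ℕ)
    (hocc : (List.range (pw n ++ [s] ++ pw n).length).map (fun j => eta (l + j)) =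
      pw n ++ [s] ++ pw n) :
    2 ^ (n + 1) ∣ l := by
  obtain ⟨hprefix, hsecond⟩ := occursAt_append.1 hocc
  have hfirst : OccursAt eta (pw n) l := (occursAt_append.1 hprefix).1
  have hlen : (pw n ++ [s]).length = 2 ^ (n + 1) := by
    simp only [List.length_append, pw_length, List.length_singleton]
    exact Nat.sub_add_cancel (Nat.one_le_two_pow)
  rw [hlen] at hsecond
  exact two_pow_succ_dvd_of_valLetter (fun k hk => valLetter_add_two_pow_of_occursAt hfirst hk)
    (valLetter_add_two_pow_of_occursAt hsecond le_rfl)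

/-- **Alignment**: for `n ≥ 1` and `s ∈ {x,y,z}`, every occurrence of
`p⁽ⁿ⁾ s p⁽ⁿ⁾` in `η` (0-indexed, starting at position `l`) satisfies
`2^(n+1) ∣ l`, i.e. it is aligned with the blocks of the `n`-decomposition. -/
theorem occurrence_alignment (n : ℕ) (hn : 1 ≤ n) (s : A)
    (hs : s ∈ ({A.x, A.y, A.z} : Set A)) (l : ℕ)
    (hocc : (List.range (pw n ++ [s] ++ pw n).length).map (fun j => eta (l + j)) =
      pw n ++ [s] ++ pw n) :
    2 ^ (n + 1) ∣ l :=
  occurrence_alignment_general n s l hocc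
end
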